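/- arXiv:1602.06498 — 3 statements merged into one kernel-verified Lean document; each statement's English description precedes it below -/
import Mathlib

section
/- Let A ∈ ℝ^{n×n}, Σ ∈ ℝ^{n×n}, and τ > 0 satisfy τ < 1/(2 max(0, ln ρ(e^A))), where ρ denotes spectral radius. Then A_τ := A - (1/(2τ)) I is Hurwitz, and P := (1/τ) ∫₀^∞ e^{-t/τ} e^{tA} Σ e^{tAᵀ} dt satisfies the Lyapunov equation A_τ P + P A_τᵀ + (1/τ)Σ = 0. -/
/-!
Both claims rest on `ρ(e^{A_τ}) = e^{-1/(2τ)} ρ(e^A) < 1`. For an eigenvalue `z` of `A_τ`, `e^z`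
lies in the spectrum of `e^{A_τ}`, so `e^{Re z} < 1`. Gelfand's formula gives
`‖e^{m A_τ}‖ = O(r^m)` for some `r < 1`, and writing `t = ⌊t⌋ + s` turns this into exponential
decay of `e^{t A_τ}`. The discounted integrand is `F t = e^{t A_τ} Σ e^{t A_τᵀ}`, which solves
`F' = A_τ F + F A_τᵀ` with `F 0 = Σ`; integrating over `(0, ∞)` gives
`A_τ X + X A_τᵀ = -Σ` for `X = ∫ F = τ P`.
-/

open Matrix MeasureTheory NormedSpace Filter Topology Asymptotics Set
open scoped Pointwise

section BanachAlgebra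

variable {𝔸 : Type*} [NormedRing 𝔸]

theorem spectrum.spectralRadius_ne_top {𝕜 : Type*} [NormedField 𝕜] [NormedAlgebra 𝕜 𝔸]
    [CompleteSpace 𝔸] (a : 𝔸) : spectralRadius 𝕜 a ≠ ⊤ :=
  ((spectrum.spectralRadius_le_pow_nnnorm_pow_one_div 𝕜 a 0).trans_lt <| by
    simpa using ENNReal.mul_lt_top ENNReal.coe_lt_top ENNReal.coe_lt_top).ne

theorem spectrum.spectralRadius_smul {𝕜 A : Type*} [NormedField 𝕜] [Ring A] [Algebra 𝕜 A]
    (a : A) {k : 𝕜} (hk : k ≠ 0) : spectralRadius 𝕜 (k • a) = ‖k‖₊ * spectralRadius 𝕜 a := by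
  have h := spectrum.unit_smul_eq_smul a (Units.mk0 k hk)
  rw [Units.smul_mk0, Units.smul_mk0] at h
  simp only [spectralRadius, h, ← Set.image_smul, iSup_image, ENNReal.mul_iSup, smul_eq_mul,
    nnnorm_mul, ENNReal.coe_mul]

theorem spectrum.exists_norm_pow_le_of_spectralRadius_lt [NormedAlgebra ℂ 𝔸] [CompleteSpace 𝔸]
    (a : 𝔸) {r : ℝ} (hr : spectralRadius ℂ a < ENNReal.ofReal r) :
    ∃ K, ∀ m : ℕ, ‖a ^ m‖ ≤ K * r ^ m := by
  have hr0 : 0 < r := ENNReal.ofReal_pos.mp (pos_of_gt hr)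
  have hev : ∀ᶠ m : ℕ in atTop, ‖a ^ m‖ ≤ r ^ m := by
    have hgelfand := spectrum.pow_norm_pow_one_div_tendsto_nhds_spectralRadius a
    filter_upwards [hgelfand.eventually_lt_const hr, eventually_gt_atTop 0] with m hm hm0
    have h := (ENNReal.ofReal_lt_ofReal_iff hr0).mp hm
    calc ‖a ^ m‖ = (‖a ^ m‖ ^ (1 / m : ℝ)) ^ m := by
          rw [← Real.rpow_natCast, ← Real.rpow_mul (norm_nonneg _),
            one_div_mul_cancel (by positivity), Real.rpow_one]
      _ ≤ r ^ m := by gcongr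
  obtain ⟨K, -, hK⟩ := bound_of_isBigO_nat_atTop (f := fun m => a ^ m) (g'' := fun m => r ^ m)
    (IsBigO.of_bound 1 (hev.mono fun m hm => by simpa [abs_of_pos hr0] using hm))
  exact ⟨K, fun m => by simpa [abs_of_pos hr0] using hK (pow_pos hr0 m).ne'⟩

theorem spectrum.re_neg_of_spectralRadius_exp_lt_one [NormedAlgebra ℂ 𝔸] [CompleteSpace 𝔸]
    {a : 𝔸} (ha : spectralRadius ℂ (exp a) < 1) {z : ℂ} (hz : z ∈ spectrum ℂ a) : z.re < 0 := by
  have hmem : exp z ∈ spectrum ℂ (exp a) := spectrum.exp_mem_exp a hz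
  have hle : (‖exp z‖₊ : ENNReal) ≤ spectralRadius ℂ (exp a) := le_iSup₂ (α := ENNReal) _ hmem
  rw [← Complex.exp_eq_exp_ℂ] at hle
  have : Real.exp z.re < 1 := by
    rw [← Complex.norm_exp]
    exact_mod_cast hle.trans_lt ha
  simpa using this

theorem NormedSpace.exp_sub_smul_one [NormedAlgebra ℝ 𝔸] [CompleteSpace 𝔸] (a : 𝔸) (k : ℝ) :
    exp (a - k • 1) = Real.exp (-k) • exp a := by
  let _ : NormedAlgebra ℚ 𝔸 := .restrictScalars ℚ ℝ 𝔸
  rw [sub_eq_add_neg, ← neg_smul, ← Algebra.algebraMap_eq_smul_one,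
    NormedSpace.exp_add_of_commute (Algebra.commutes _ a).symm, ← algebraMap_exp_comm,
    Real.exp_eq_exp_ℝ, ← Algebra.commutes, Algebra.smul_def]

theorem NormedSpace.exists_norm_exp_smul_le [NormedAlgebra ℝ 𝔸] [CompleteSpace 𝔸] (a : 𝔸)
    {K c : ℝ} (h : ∀ m : ℕ, ‖exp a ^ m‖ ≤ K * Real.exp (c * m)) :
    ∃ C, ∀ t : ℝ, 0 ≤ t → ‖exp (t • a)‖ ≤ C * Real.exp (c * t) := by
  let _ : NormedAlgebra ℚ 𝔸 := .restrictScalars ℚ ℝ 𝔸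
  have hK : 0 ≤ K := by simpa using (norm_nonneg _).trans (h 0)
  obtain ⟨M, hM⟩ := (isCompact_Icc (a := (0 : ℝ)) (b := 1)).exists_bound_of_continuousOn
    (f := fun s : ℝ => exp (s • a)) (by fun_prop)
  have hM0 : 0 ≤ M := (norm_nonneg _).trans (hM 0 ⟨le_rfl, zero_le_one⟩)
  refine ⟨M * K * Real.exp |c|, fun t ht => ?_⟩
  set m := ⌊t⌋₊
  set s := t - m
  have hs : s ∈ Icc (0 : ℝ) 1 := ⟨sub_nonneg.mpr (Nat.floor_le ht), by
    simp only [s, m]; linarith [Nat.lt_floor_add_one t]⟩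
  have hsplit : exp (t • a) = exp (s • a) * exp a ^ m := by
    rw [← NormedSpace.exp_nsmul, ← Nat.cast_smul_eq_nsmul ℝ, ← NormedSpace.exp_add_of_commute
      (((Commute.refl a).smul_left s).smul_right _), ← add_smul, sub_add_cancel]
  have hcm : c * m ≤ |c| + c * t := by
    have hcs : |c * s| ≤ |c| := by
      rw [abs_mul]
      exact mul_le_of_le_one_right (abs_nonneg c) ((abs_of_nonneg hs.1).trans_le hs.2)
    have : c * m = c * t - c * s := by simp only [s]; ring
    linarith [neg_abs_le (c * s)]
  calc ‖exp (t • a)‖ ≤ ‖exp (s • a)‖ * ‖exp a ^ m‖ := hsplit ▸ norm_mul_le _ _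
    _ ≤ M * (K * Real.exp (c * m)) := mul_le_mul (hM s hs) (h m) (norm_nonneg _) hM0
    _ ≤ M * (K * Real.exp (|c| + c * t)) := by gcongr
    _ = M * K * Real.exp |c| * Real.exp (c * t) := by rw [Real.exp_add]; ring

end BanachAlgebra

theorem ContinuousLinearMap.map_integral_Ioi_eq_neg_of_hasDerivAt {E : Type*}
    [NormedAddCommGroup E] [NormedSpace ℝ E] [CompleteSpace E] (L : E →L[ℝ] E) {F : ℝ → E}
    (hF : ∀ t, HasDerivAt F (L (F t)) t) {C ε : ℝ} (hε : 0 < ε)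
    (hdecay : ∀ t, 0 ≤ t → ‖F t‖ ≤ C * Real.exp (-ε * t)) :
    L (∫ t in Ioi 0, F t) = -F 0 := by
  have hcont : Continuous F := continuous_iff_continuousAt.mpr fun t => (hF t).continuousAt
  have hint : IntegrableOn F (Ioi 0) := by
    refine ((exp_neg_integrableOn_Ioi 0 hε).const_mul C).mono'
      hcont.aestronglyMeasurable.restrict ?_
    rw [ae_restrict_iff' measurableSet_Ioi]
    exact ae_of_all _ fun t ht => hdecay t (le_of_lt ht)
  have hlim : Tendsto F atTop (𝓝 0) := by
    refine squeeze_zero_norm' ((eventually_ge_atTop 0).mono hdecay) ?_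
    simpa using (Real.tendsto_exp_atBot.comp
      (tendsto_id.const_mul_atTop_of_neg (neg_neg_iff_pos.mpr hε))).const_mul C
  have hFTC := integral_Ioi_of_hasDerivAt_of_tendsto hcont.continuousWithinAt
    (fun t _ => hF t) (L.integrable_comp hint) hlim
  rwa [L.integral_comp_comm hint, zero_sub] at hFTC

namespace Matrix

variable {ι : Type*} [Fintype ι] [DecidableEq ι]

noncomputable def lyapunovFlow (B S : Matrix ι ι ℝ) (t : ℝ) : Matrix ι ι ℝ :=
  exp (t • B) * S * exp (t • Bᵀ)

/-! Estimates use the Frobenius norm, a transpose-invariant Banach-algebra norm. Results leave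
this section entrywise or norm-free, because the integral of the theorem is taken for the sup
norm. -/

section Frobenius

open scoped Matrix.Norms.Frobenius

theorem frobenius_norm_apply_le {m n α : Type*} [Fintype m] [Fintype n] [SeminormedAddCommGroup α]
    (A : Matrix m n α) (i : m) (j : n) : ‖A i j‖ ≤ ‖A‖ :=
  (PiLp.norm_apply_le (WithLp.toLp 2 fun j => A i j) j).trans
    (PiLp.norm_apply_le (WithLp.toLp 2 fun i => WithLp.toLp 2 fun j => A i j) i)

theorem map_ofReal_exp (B : Matrix ι ι ℝ) :
    (exp B).map Complex.ofReal = exp (B.map Complex.ofReal) :=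
  map_exp Complex.ofRealHom.mapMatrix (continuous_id.matrix_map Complex.continuous_ofReal) B

theorem re_neg_of_spectralRadius_exp_lt_one {B : Matrix ι ι ℝ}
    (hB : spectralRadius ℂ ((exp B).map Complex.ofReal) < 1) {z : ℂ}
    (hz : z ∈ spectrum ℂ (B.map Complex.ofReal)) : z.re < 0 := by
  rw [map_ofReal_exp] at hB
  exact spectrum.re_neg_of_spectralRadius_exp_lt_one hB hz

/-- `NormedSpace.exp_sub_smul_one` restated so that its `exp` carries the standard topology on
matrices, not the Frobenius one, and can be rewritten with. -/
theorem exp_sub_smul_one (A : Matrix ι ι ℝ) (k : ℝ) :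
    exp (A - k • 1) = Real.exp (-k) • exp A :=
  NormedSpace.exp_sub_smul_one A k

theorem spectralRadius_exp_sub_smul_one_lt_one (A : Matrix ι ι ℝ) {k : ℝ}
    (hk : Real.log (spectralRadius ℂ ((exp A).map Complex.ofReal)).toReal < k) :
    spectralRadius ℂ ((exp (A - k • 1)).map Complex.ofReal) < 1 := by
  have hρ : spectralRadius ℂ ((exp A).map Complex.ofReal) < ENNReal.ofReal (Real.exp k) := by
    rw [← ENNReal.ofReal_toReal (spectrum.spectralRadius_ne_top _),
      ENNReal.ofReal_lt_ofReal_iff (Real.exp_pos k)]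
    rcases ENNReal.toReal_nonneg.eq_or_lt with h0 | hpos
    · exact h0 ▸ Real.exp_pos k
    · exact (Real.log_lt_iff_lt_exp hpos).mp hk
  have hmap : (exp (A - k • 1)).map Complex.ofReal =
      (Real.exp (-k) : ℂ) • (exp A).map Complex.ofReal := by
    rw [Matrix.exp_sub_smul_one]; ext i j; simp
  have hnorm : (‖(Real.exp (-k) : ℂ)‖₊ : ENNReal) = ENNReal.ofReal (Real.exp (-k)) := by
    rw [Complex.nnnorm_real, Real.nnnorm_of_nonneg (Real.exp_pos _).le,
      ENNReal.ofReal_eq_coe_nnreal]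
  rw [hmap, spectrum.spectralRadius_smul _ (by exact_mod_cast (Real.exp_pos _).ne'), hnorm]
  calc ENNReal.ofReal (Real.exp (-k)) * spectralRadius ℂ ((exp A).map Complex.ofReal)
      < ENNReal.ofReal (Real.exp (-k)) * ENNReal.ofReal (Real.exp k) :=
        ENNReal.mul_lt_mul_right (by simpa using Real.exp_pos _) ENNReal.ofReal_ne_top hρ
    _ = 1 := by
        rw [← ENNReal.ofReal_mul (Real.exp_pos _).le, ← Real.exp_add, neg_add_cancel,
          Real.exp_zero, ENNReal.ofReal_one]

theorem lyapunovFlow_sub_smul_one (A S : Matrix ι ι ℝ) (k t : ℝ) :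
    lyapunovFlow (A - k • 1) S t =
      Real.exp (-(2 * k * t)) • (exp (t • A) * S * exp (t • Aᵀ)) := by
  have h : ∀ M : Matrix ι ι ℝ, exp (t • (M - k • 1)) = Real.exp (-(k * t)) • exp (t • M) := by
    intro M
    rw [smul_sub, smul_smul, mul_comm, Matrix.exp_sub_smul_one]
  rw [lyapunovFlow, h, transpose_sub, transpose_smul, transpose_one, h, smul_mul_assoc,
    smul_mul_assoc, mul_smul_comm, smul_smul, ← Real.exp_add]
  ring_nf

theorem hasDerivAt_lyapunovFlow (B S : Matrix ι ι ℝ) (t : ℝ) :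
    HasDerivAt (lyapunovFlow B S) (B * lyapunovFlow B S t + lyapunovFlow B S t * Bᵀ) t := by
  have h : B * lyapunovFlow B S t + lyapunovFlow B S t * Bᵀ =
      B * exp (t • B) * S * exp (t • Bᵀ) + exp (t • B) * S * (exp (t • Bᵀ) * Bᵀ) := by
    simp only [lyapunovFlow, mul_assoc]
  rw [h]
  exact ((hasDerivAt_exp_smul_const' B t).mul_const S).mul (hasDerivAt_exp_smul_const Bᵀ t)

theorem exists_abs_lyapunovFlow_apply_le {B : Matrix ι ι ℝ}
    (hB : spectralRadius ℂ ((exp B).map Complex.ofReal) < 1) (S : Matrix ι ι ℝ) :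
    ∃ C ε, 0 ≤ C ∧ 0 < ε ∧
      ∀ t, 0 ≤ t → ∀ i j, |lyapunovFlow B S t i j| ≤ C * Real.exp (-ε * t) := by
  obtain ⟨r, -, hρr, hr1⟩ := ENNReal.lt_iff_exists_real_btwn.mp hB
  have hr0 : 0 < r := ENNReal.ofReal_pos.mp (pos_of_gt hρr)
  have hr1 : r < 1 := by simpa using hr1
  obtain ⟨K, hK⟩ := spectrum.exists_norm_pow_le_of_spectralRadius_lt _ hρr
  have hpow : ∀ m : ℕ, ‖exp B ^ m‖ ≤ K * Real.exp (Real.log r * m) := fun m => by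
    rw [mul_comm (Real.log r), Real.exp_nat_mul, Real.exp_log hr0,
      ← frobenius_norm_map_eq _ _ Complex.norm_real]
    exact (congrArg norm (map_pow Complex.ofRealHom.mapMatrix (exp B) m)).trans_le (hK m)
  obtain ⟨C, hC⟩ := exists_norm_exp_smul_le B hpow
  refine ⟨C ^ 2 * ‖S‖, -(2 * Real.log r), by positivity, by linarith [Real.log_neg hr0 hr1],
    fun t ht i j => ?_⟩
  calc |lyapunovFlow B S t i j| ≤ ‖lyapunovFlow B S t‖ := by
        simpa using frobenius_norm_apply_le (lyapunovFlow B S t) i j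
    _ ≤ ‖exp (t • B)‖ * ‖S‖ * ‖exp (t • Bᵀ)‖ :=
        (norm_mul_le _ _).trans (by gcongr; exact norm_mul_le _ _)
    _ = ‖exp (t • B)‖ ^ 2 * ‖S‖ := by
        rw [← transpose_smul, exp_transpose, frobenius_norm_transpose]; ring
    _ ≤ (C * Real.exp (Real.log r * t)) ^ 2 * ‖S‖ := by gcongr; exact hC t ht
    _ = C ^ 2 * ‖S‖ * Real.exp (-(-(2 * Real.log r)) * t) := by
        rw [mul_pow, ← Real.exp_nat_mul]; ring_nf

end Frobenius

end Matrix

attribute [local instance] Matrix.normedAddCommGroup Matrix.normedSpace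

theorem Matrix.integral_lyapunovFlow_lyapunov_eq_zero {ι : Type*} [Fintype ι] [DecidableEq ι]
    {B : Matrix ι ι ℝ} (hB : spectralRadius ℂ ((exp B).map Complex.ofReal) < 1)
    (S : Matrix ι ι ℝ) :
    B * (∫ t in Ioi 0, lyapunovFlow B S t) + (∫ t in Ioi 0, lyapunovFlow B S t) * Bᵀ + S = 0 := by
  obtain ⟨C, ε, hC, hε, hdecay⟩ := exists_abs_lyapunovFlow_apply_le hB S
  let L : Matrix ι ι ℝ →L[ℝ] Matrix ι ι ℝ :=
    LinearMap.toContinuousLinearMap (LinearMap.mulLeft ℝ B + LinearMap.mulRight ℝ Bᵀ)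
  have h := L.map_integral_Ioi_eq_neg_of_hasDerivAt (hasDerivAt_lyapunovFlow B S) hε
    fun t ht => (norm_le_iff (by positivity)).mpr fun i j => hdecay t ht i j
  rw [← eq_neg_iff_add_eq_zero]
  calc _ = L (∫ t in Ioi 0, lyapunovFlow B S t) := rfl
    _ = -lyapunovFlow B S 0 := h
    _ = -S := by simp [lyapunovFlow]

theorem discounted_second_moment_ALE
    {n : ℕ} (A Sig : Matrix (Fin n) (Fin n) ℝ) (τ : ℝ) (hτ : 0 < τ)
    (hτmax : τ < 1 / (2 * max 0
      (Real.log ((spectralRadius ℂ ((NormedSpace.exp A).map Complex.ofReal)).toReal))))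
    (Aτ : Matrix (Fin n) (Fin n) ℝ)
    (hAτ : Aτ = A - (1 / (2 * τ)) • (1 : Matrix (Fin n) (Fin n) ℝ))
    (P : Matrix (Fin n) (Fin n) ℝ)
    (hP : P = (1 / τ) • ∫ t in Set.Ioi (0 : ℝ),
        Real.exp (-t / τ) • (NormedSpace.exp (t • A) * Sig * NormedSpace.exp (t • Aᵀ))) :
    (∀ μ ∈ spectrum ℂ (Aτ.map Complex.ofReal), μ.re < 0) ∧
      Aτ * P + P * Aτᵀ + (1 / τ) • Sig = 0 := by
  set ρ := spectralRadius ℂ ((exp A).map Complex.ofReal)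
  have hlog : Real.log ρ.toReal < 1 / (2 * τ) := by
    rcases le_or_gt (Real.log ρ.toReal) 0 with h | h
    · exact h.trans_lt (by positivity)
    · rw [max_eq_right h.le, lt_one_div hτ (by positivity)] at hτmax
      have : 1 / (2 * τ) = 1 / τ / 2 := by ring
      linarith
  have hstable : spectralRadius ℂ ((exp Aτ).map Complex.ofReal) < 1 :=
    hAτ ▸ Matrix.spectralRadius_exp_sub_smul_one_lt_one A hlog
  refine ⟨fun μ hμ => Matrix.re_neg_of_spectralRadius_exp_lt_one hstable hμ, ?_⟩
  have hP' : P = (1 / τ) • ∫ t in Ioi 0, Matrix.lyapunovFlow Aτ Sig t := by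
    simp_rw [hP, hAτ, Matrix.lyapunovFlow_sub_smul_one]
    ring_nf
  rw [hP', Matrix.mul_smul, Matrix.smul_mul, ← smul_add, ← smul_add,
    Matrix.integral_lyapunovFlow_lyapunov_eq_zero hstable, smul_zero]
end

section
/- Let Θ be an invertible real antisymmetric N×N matrix, 𝒜 Hurwitz-shifted as 𝒜_τ := 𝒜 - (1/(2τ))I with 𝒜 satisfying 𝒜ᵀ = -Θ^{-1}𝒜Θ, and let 𝒫 be symmetric satisfying 𝒜_τ 𝒫 + 𝒫 𝒜_τᵀ + (1/τ)Σ = 0. Then P := 𝒫Θ^{-1} satisfies the Lie-algebraic equation [𝒜, P] = (1/τ)(P - ΣΘ^{-1}). -/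
/-! Right multiplication by `Θ⁻¹` conjugates the Lyapunov operator `X ↦ 𝒜X + X𝒜ᵀ` of a
Hamiltonian `𝒜` to the commutator `[𝒜, ·]`, because `𝒜ᵀΘ⁻¹ = -Θ⁻¹𝒜`. The shift `𝒜_τ = 𝒜 - I/(2τ)`
only contributes `-𝒫/τ` to the Lyapunov operator, so the Lyapunov equation for `𝒫` becomes
`[𝒜, P] - P/τ + ΣΘ⁻¹/τ = 0`. -/

open Matrix

namespace Matrix

variable {n R : Type*} [Fintype n] [DecidableEq n] [CommRing R]

theorem lyapunov_mul_inv_eq_commutator {Θ A : Matrix n n R} (hΘ : IsUnit Θ)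
    (hA : Aᵀ = -(Θ⁻¹ * A * Θ)) (X : Matrix n n R) :
    (A * X + X * Aᵀ) * Θ⁻¹ = A * (X * Θ⁻¹) - X * Θ⁻¹ * A := by
  have hΘΘ : Θ * Θ⁻¹ = 1 := mul_nonsing_inv Θ ((isUnit_iff_isUnit_det Θ).mp hΘ)
  rw [hA, add_mul, mul_neg, neg_mul, ← sub_eq_add_neg]
  simp only [Matrix.mul_assoc, hΘΘ, Matrix.mul_one]

theorem lyapunov_sub_smul_one (A X : Matrix n n R) (c : R) :
    (A - c • 1) * X + X * (A - c • 1)ᵀ = A * X + X * Aᵀ - (2 * c) • X := by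
  simp only [transpose_sub, transpose_smul, transpose_one, Matrix.sub_mul, Matrix.mul_sub,
    Matrix.smul_mul, Matrix.mul_smul, Matrix.one_mul, Matrix.mul_one]
  module

end Matrix

theorem lie_algebraic_controllability_ALE_general
    {N : ℕ} (Θ cA Sig cP : Matrix (Fin N) (Fin N) ℝ) (τ : ℝ)
    (hΘinv : IsUnit Θ)
    (hcA : cAᵀ = -(Θ⁻¹ * cA * Θ))
    (cAτ : Matrix (Fin N) (Fin N) ℝ) (hcAτ : cAτ = cA - (1 / (2 * τ)) • (1 : Matrix (Fin N) (Fin N) ℝ))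
    (hALE : cAτ * cP + cP * cAτᵀ + (1 / τ) • Sig = 0)
    (P : Matrix (Fin N) (Fin N) ℝ) (hP : P = cP * Θ⁻¹) :
    cA * P - P * cA = (1 / τ) • (P - Sig * Θ⁻¹) := by
  have hshift : 2 * (1 / (2 * τ)) = 1 / τ := by
    rw [mul_one_div, div_mul_cancel_left₀ two_ne_zero, one_div]
  rw [hcAτ, lyapunov_sub_smul_one, hshift] at hALE
  have h := congrArg (· * Θ⁻¹) hALE
  simp only [Matrix.add_mul, Matrix.sub_mul, smul_mul, Matrix.zero_mul,
    lyapunov_mul_inv_eq_commutator hΘinv hcA, ← hP] at h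
  linear_combination (norm := module) h

theorem lie_algebraic_controllability_ALE
    {N : ℕ} (Θ cA Sig cP : Matrix (Fin N) (Fin N) ℝ) (τ : ℝ) (hτ : 0 < τ)
    (hΘinv : IsUnit Θ) (hΘ : Θᵀ = -Θ)
    (hcA : cAᵀ = -(Θ⁻¹ * cA * Θ)) (hcP : cPᵀ = cP)
    (cAτ : Matrix (Fin N) (Fin N) ℝ) (hcAτ : cAτ = cA - (1 / (2 * τ)) • (1 : Matrix (Fin N) (Fin N) ℝ))
    (hALE : cAτ * cP + cP * cAτᵀ + (1 / τ) • Sig = 0)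
    (P : Matrix (Fin N) (Fin N) ℝ) (hP : P = cP * Θ⁻¹) :
    cA * P - P * cA = (1 / τ) • (P - Sig * Θ⁻¹) :=
  lie_algebraic_controllability_ALE_general Θ cA Sig cP τ hΘinv hcA cAτ hcAτ hALE P hP
end

section
/- Let Θ be an invertible real antisymmetric N×N matrix, 𝒜 Hamiltonian (𝒜ᵀ = -Θ^{-1}𝒜Θ), τ > 0, C ∈ ℝ^{m×N}, and let 𝒬 symmetric satisfy 𝒜_τᵀ 𝒬 + 𝒬 𝒜_τ + CᵀC = 0, where 𝒜_τ := 𝒜 - I/(2τ). Then Q := Θ𝒬 satisfies [𝒜, Q] = Θ CᵀC - (1/τ) Q. -/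
/-!
Left-multiplying the shifted Lyapunov equation by `Θ` and using the Hamiltonian condition in the
form `Θ 𝒜ᵀ = -𝒜 Θ` turns `Θ 𝒜_τᵀ 𝒬` into `-(𝒜 + I/(2τ)) Q`, while `Θ 𝒬 𝒜_τ = Q (𝒜 - I/(2τ))`;
the two shifts add up to `-(1/τ) Q`.
-/

open Matrix

namespace Matrix

variable {n R : Type*} [Fintype n] [DecidableEq n] [CommRing R]

theorem mul_transpose_eq_neg_of_transpose_eq_neg_conj {Θ A : Matrix n n R} (hΘ : IsUnit Θ)
    (hA : Aᵀ = -(Θ⁻¹ * A * Θ)) : Θ * Aᵀ = -(A * Θ) := by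
  rw [hA, mul_neg, ← mul_assoc, ← mul_assoc, mul_nonsing_inv Θ ((isUnit_iff_isUnit_det Θ).mp hΘ),
    one_mul]

theorem commutator_mul_eq_of_shifted_lyapunov {Θ A P K : Matrix n n R} (c : R)
    (hΘA : Θ * Aᵀ = -(A * Θ)) (hP : (A - c • 1)ᵀ * P + P * (A - c • 1) + K = 0) :
    A * (Θ * P) - Θ * P * A = Θ * K - (2 * c) • (Θ * P) := by
  have hΘP : Θ * ((A - c • 1)ᵀ * P + P * (A - c • 1) + K) = 0 := by rw [hP, mul_zero]
  simp only [transpose_sub, transpose_smul, transpose_one, mul_add, sub_mul, mul_sub,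
    smul_mul_assoc, mul_smul_comm, one_mul, mul_one, ← mul_assoc, hΘA, neg_mul] at hΘP
  rw [← mul_assoc A, ← sub_eq_zero, ← neg_eq_zero, ← hΘP, two_mul, add_smul]
  abel

end Matrix

theorem lie_algebraic_observability_ALE_general
    {N m : ℕ} (Θ cA cQ : Matrix (Fin N) (Fin N) ℝ) (C : Matrix (Fin m) (Fin N) ℝ)
    (τ : ℝ)
    (hΘinv : IsUnit Θ)
    (hcA : cAᵀ = -(Θ⁻¹ * cA * Θ))
    (cAτ : Matrix (Fin N) (Fin N) ℝ) (hcAτ : cAτ = cA - (1 / (2 * τ)) • (1 : Matrix (Fin N) (Fin N) ℝ))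
    (hALE : cAτᵀ * cQ + cQ * cAτ + Cᵀ * C = 0)
    (Q : Matrix (Fin N) (Fin N) ℝ) (hQ : Q = Θ * cQ) :
    cA * Q - Q * cA = Θ * (Cᵀ * C) - (1 / τ) • Q := by
  subst hcAτ hQ
  have hshift : 2 * (1 / (2 * τ)) = 1 / τ := by
    rw [one_div, mul_inv, ← mul_assoc, mul_inv_cancel₀ two_ne_zero, one_mul, one_div]
  rw [← hshift]
  exact commutator_mul_eq_of_shifted_lyapunov _
    (mul_transpose_eq_neg_of_transpose_eq_neg_conj hΘinv hcA) hALE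

theorem lie_algebraic_observability_ALE
    {N m : ℕ} (Θ cA cQ : Matrix (Fin N) (Fin N) ℝ) (C : Matrix (Fin m) (Fin N) ℝ)
    (τ : ℝ) (hτ : 0 < τ)
    (hΘinv : IsUnit Θ) (hΘ : Θᵀ = -Θ)
    (hcA : cAᵀ = -(Θ⁻¹ * cA * Θ)) (hcQ : cQᵀ = cQ)
    (cAτ : Matrix (Fin N) (Fin N) ℝ) (hcAτ : cAτ = cA - (1 / (2 * τ)) • (1 : Matrix (Fin N) (Fin N) ℝ))
    (hALE : cAτᵀ * cQ + cQ * cAτ + Cᵀ * C = 0)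
    (Q : Matrix (Fin N) (Fin N) ℝ) (hQ : Q = Θ * cQ) :
    cA * Q - Q * cA = Θ * (Cᵀ * C) - (1 / τ) • Q :=
  lie_algebraic_observability_ALE_general Θ cA cQ C τ hΘinv hcA cAτ hcAτ hALE Q hQ
end
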